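/- arXiv:1109.4898 — 2 statements merged into one kernel-verified Lean document; each statement's English description precedes it below -/
import Mathlib

section
/- Let 𝕂 be ℝ or ℂ, let 1 ≤ p, r, q_1, …, q_n < ∞, and let E_1, …, E_n, F be Banach spaces over 𝕂. If 1/p > 1/q_i + 1/r for some i ∈ {1,…,n}, then the only continuous n-linear operator T : E_1 × ⋯ × E_n → F that is multiple (p;q_1,…,q_n;r)-summing is the zero operator. -/
/-!
Test the summing inequality on a line of multi-indices: put `a i` in all `m` slots of the
`i`-th variable, `a k` in the first slot only of every other variable, and let the functionals
norm `T a` exactly on the `m` multi-indices along that line. The left-hand side is then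
`m^(1/p) ‖T a‖` while the right-hand side is `O(m^(1/r + 1/qᵢ))`, which forces `T a = 0`.
-/

open scoped BigOperators
noncomputable section

/-- The weak `ℓ^q` norm of a finite family in a normed space:
`sup_{‖φ‖ ≤ 1} (∑_j |φ(x_j)|^q)^{1/q}`. -/
def weakLpNorm (𝕂 : Type*) [RCLike 𝕂] {E : Type*} [NormedAddCommGroup E] [NormedSpace 𝕂 E]
    {J : Type*} [Fintype J] (q : ℝ) (x : J → E) : ℝ :=
  ⨆ φ : {φ : E →L[𝕂] 𝕂 // ‖φ‖ ≤ 1}, (∑ j, ‖φ.1 (x j)‖ ^ q) ^ (1 / q)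

/-- `T` is multiple `(p;q₁,…,qₙ;r)`-summing. -/
def MultipleSummingR (𝕂 : Type*) [RCLike 𝕂] {n : ℕ} {E : Fin n → Type*}
    [∀ i, NormedAddCommGroup (E i)] [∀ i, NormedSpace 𝕂 (E i)]
    {F : Type*} [NormedAddCommGroup F] [NormedSpace 𝕂 F]
    (p r : ℝ) (q : Fin n → ℝ) (T : ((i : Fin n) → E i) → F) : Prop :=
  ∃ C : ℝ, 0 ≤ C ∧ ∀ (m : ℕ) (x : (i : Fin n) → Fin m → E i)
      (φ : (Fin n → Fin m) → (F →L[𝕂] 𝕂)),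
      (∑ j : Fin n → Fin m, ‖φ j (T (fun i => x i (j i)))‖ ^ p) ^ (1 / p) ≤
        C * weakLpNorm 𝕂 r φ * ∏ i, weakLpNorm 𝕂 (q i) (x i)

open Finset Filter Topology

lemma weakLpNorm_nonneg (𝕂 : Type*) [RCLike 𝕂] {E : Type*} [NormedAddCommGroup E]
    [NormedSpace 𝕂 E] {J : Type*} [Fintype J] (q : ℝ) (x : J → E) :
    0 ≤ weakLpNorm 𝕂 q x :=
  Real.iSup_nonneg fun _ => by positivity

lemma weakLpNorm_le_rpow_sum {𝕂 : Type*} [RCLike 𝕂] {E : Type*} [NormedAddCommGroup E]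
    [NormedSpace 𝕂 E] {J : Type*} [Fintype J] {q : ℝ} (hq : 0 < q) (x : J → E) :
    weakLpNorm 𝕂 q x ≤ (∑ j, ‖x j‖ ^ q) ^ (1 / q) := by
  have : Nonempty {φ : E →L[𝕂] 𝕂 // ‖φ‖ ≤ 1} := ⟨⟨0, by simp⟩⟩
  refine ciSup_le fun φ => ?_
  gcongr with j
  simpa using φ.1.le_of_opNorm_le φ.2 (x j)

lemma weakLpNorm_ite_le {𝕂 : Type*} [RCLike 𝕂] {E : Type*} [NormedAddCommGroup E]
    [NormedSpace 𝕂 E] {J : Type*} [Fintype J] [DecidableEq J] {q : ℝ} (hq : 0 < q)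
    (S : Finset J) (v : E) :
    weakLpNorm 𝕂 q (fun j => if j ∈ S then v else 0) ≤ (#S : ℝ) ^ (1 / q) * ‖v‖ := by
  refine (weakLpNorm_le_rpow_sum hq _).trans_eq ?_
  have hsum : ∑ j, ‖if j ∈ S then v else 0‖ ^ q = #S * ‖v‖ ^ q := by
    simp [apply_ite, Real.zero_rpow hq.ne', Finset.sum_ite_mem]
  rw [hsum, Real.mul_rpow (by positivity) (by positivity), ← Real.rpow_mul (norm_nonneg _),
    mul_one_div_cancel hq.ne', Real.rpow_one]

lemma nonpos_of_forall_rpow_mul_le {c K α β : ℝ} (hαβ : α < β)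
    (h : ∀ m : ℕ, ((m + 1 : ℕ) : ℝ) ^ β * c ≤ K * ((m + 1 : ℕ) : ℝ) ^ α) : c ≤ 0 := by
  have hN : Tendsto (fun m : ℕ => ((m + 1 : ℕ) : ℝ)) atTop atTop :=
    tendsto_natCast_atTop_atTop.comp (tendsto_add_atTop_nat 1)
  have hlim : Tendsto (fun m : ℕ => K * ((m + 1 : ℕ) : ℝ) ^ (α - β)) atTop (𝓝 0) := by
    simpa using ((tendsto_rpow_neg_atTop (sub_pos.2 hαβ)).comp hN).const_mul K
  refine ge_of_tendsto hlim (Eventually.of_forall fun m => ?_)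
  have hpos : (0 : ℝ) < ((m + 1 : ℕ) : ℝ) ^ β := by positivity
  rw [Real.rpow_sub (by positivity), mul_div_assoc', le_div_iff₀ hpos, mul_comm]
  exact h m

theorem MultipleSummingR.exists_rectangle_bound {𝕂 : Type*} [RCLike 𝕂] {n : ℕ}
    {E : Fin n → Type*} [∀ k, NormedAddCommGroup (E k)] [∀ k, NormedSpace 𝕂 (E k)]
    {F : Type*} [NormedAddCommGroup F] [NormedSpace 𝕂 F] {p r : ℝ} {q : Fin n → ℝ}
    (hp : 0 < p) (hr : 0 < r) (hq : ∀ k, 0 < q k) {T : (∀ k, E k) → F}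
    (hT : MultipleSummingR 𝕂 p r q T) :
    ∃ C, 0 ≤ C ∧ ∀ (m : ℕ) (S : Fin n → Finset (Fin m)) (a : ∀ k, E k) (ψ : F →L[𝕂] 𝕂),
      (∏ k, (#(S k) : ℝ)) ^ (1 / p) * ‖ψ (T a)‖ ≤
        C * ((∏ k, (#(S k) : ℝ)) ^ (1 / r) * ‖ψ‖) * ∏ k, ((#(S k) : ℝ) ^ (1 / q k) * ‖a k‖) := by
  obtain ⟨C, hC, hbound⟩ := hT
  refine ⟨C, hC, fun m S a ψ => ?_⟩
  have hcard : ∏ k, (#(S k) : ℝ) = #(Fintype.piFinset S) := by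
    rw [Fintype.card_piFinset, Nat.cast_prod]
  have hsum : ∑ j, ‖(if j ∈ Fintype.piFinset S then ψ else 0)
      (T fun k => if j k ∈ S k then a k else 0)‖ ^ p = #(Fintype.piFinset S) * ‖ψ (T a)‖ ^ p := by
    rw [← nsmul_eq_mul, ← sum_const, ← sum_subset (subset_univ _)]
    · refine sum_congr rfl fun j hj => ?_
      have ha : (fun k => if j k ∈ S k then a k else 0) = a :=
        funext fun k => if_pos (Fintype.mem_piFinset.1 hj k)
      rw [if_pos hj, ha]
    · intro j _ hj
      rw [if_neg hj, zero_apply, norm_zero, Real.zero_rpow hp.ne']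
  have hψ := weakLpNorm_ite_le (𝕂 := 𝕂) hr (Fintype.piFinset S) ψ
  have hx := fun k => weakLpNorm_ite_le (𝕂 := 𝕂) (hq k) (S k) (a k)
  have hmain := hbound m (fun k j => if j ∈ S k then a k else 0)
    (fun j => if j ∈ Fintype.piFinset S then ψ else 0)
  rw [hsum, Real.mul_rpow (Nat.cast_nonneg _) (by positivity), ← Real.rpow_mul (norm_nonneg _),
    mul_one_div_cancel hp.ne', Real.rpow_one] at hmain
  rw [hcard]
  refine hmain.trans ?_
  gcongr
  · exact prod_nonneg fun k _ => weakLpNorm_nonneg 𝕂 _ _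
  · exact fun k _ => weakLpNorm_nonneg 𝕂 _ _
  · exact hx _

theorem multipleSummingR_eq_zero_of_exponents_general
    {𝕂 : Type*} [RCLike 𝕂] {n : ℕ}
    (p r : ℝ) (q : Fin n → ℝ) (hr : 1 ≤ r) (hq : ∀ i, 1 ≤ q i)
    (E : Fin n → Type*) [∀ i, NormedAddCommGroup (E i)] [∀ i, NormedSpace 𝕂 (E i)]
    (F : Type*) [NormedAddCommGroup F] [NormedSpace 𝕂 F]
    (hex : ∃ i : Fin n, 1 / p > 1 / q i + 1 / r)
    (T : ContinuousMultilinearMap 𝕂 E F)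
    (hT : MultipleSummingR 𝕂 p r q (⇑T)) :
    T = 0 := by
  obtain ⟨i, hi⟩ := hex
  have hr₀ : 0 < r := by linarith
  have hq₀ : ∀ k, 0 < q k := fun k => by linarith [hq k]
  have hp₀ : 0 < p := one_div_pos.1 (hi.trans' (by have := hq₀ i; positivity))
  obtain ⟨C, hC, hrect⟩ := hT.exists_rectangle_bound hp₀ hr₀ hq₀
  ext a
  obtain ⟨ψ, hψ, hψa⟩ := exists_dual_vector'' 𝕂 (T a)
  refine norm_le_zero_iff.1 (nonpos_of_forall_rpow_mul_le (K := C * ∏ k, ‖a k‖) hi fun m => ?_)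
  have h := hrect (m + 1) (fun k => if k = i then univ else {0}) a ψ
  simp only [apply_ite, card_univ, Fintype.card_fin, card_singleton, Nat.cast_one, prod_ite_eq',
    mem_univ, if_true, prod_mul_distrib, hψa, RCLike.norm_ofReal, abs_norm] at h
  set N : ℝ := ((m + 1 : ℕ) : ℝ)
  have hline : ∏ k, (if k = i then N else 1) ^ (1 / q k) = N ^ (1 / q i) :=
    (Fintype.prod_eq_single i fun k hk => by rw [if_neg hk, Real.one_rpow]).trans
      (by rw [if_pos rfl])
  rw [hline] at h
  calc N ^ (1 / p) * ‖T a‖ ≤ C * (N ^ (1 / r) * ‖ψ‖) * (N ^ (1 / q i) * ∏ k, ‖a k‖) := h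
    _ ≤ C * (N ^ (1 / r) * 1) * (N ^ (1 / q i) * ∏ k, ‖a k‖) := by gcongr
    _ = (C * ∏ k, ‖a k‖) * N ^ (1 / q i + 1 / r) := by rw [Real.rpow_add (by positivity)]; ring

/-- if `1/p > 1/qᵢ + 1/r` for some `i`, then the only multiple
`(p;q₁,…,qₙ;r)`-summing operator is `0`. -/
theorem multipleSummingR_eq_zero_of_exponents
    {𝕂 : Type*} [RCLike 𝕂] {n : ℕ} (hn : 1 ≤ n)
    (p r : ℝ) (q : Fin n → ℝ) (hp : 1 ≤ p) (hr : 1 ≤ r) (hq : ∀ i, 1 ≤ q i)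
    (E : Fin n → Type*) [∀ i, NormedAddCommGroup (E i)] [∀ i, NormedSpace 𝕂 (E i)]
    [∀ i, CompleteSpace (E i)]
    (F : Type*) [NormedAddCommGroup F] [NormedSpace 𝕂 F] [CompleteSpace F]
    (hex : ∃ i : Fin n, 1 / p > 1 / q i + 1 / r)
    (T : ContinuousMultilinearMap 𝕂 E F)
    (hT : MultipleSummingR 𝕂 p r q (⇑T)) :
    T = 0 :=
  multipleSummingR_eq_zero_of_exponents_general p r q hr hq E F hex T hT
end
end

section
/- Let 𝕂 be ℝ or ℂ, let 1 ≤ p, q, r < ∞, let n ≥ 1, and let E, F be Banach spaces over 𝕂. Let T : E^n → F be a symmetric continuous n-linear operator that is multiple (p;q,…,q;r)-summing, and let γ ∈ E*. Define the symmetric continuous (n+1)-linear operator S : E^{n+1} → F by S(x_1,…,x_{n+1}) = (1/(n+1)) ∑_{k=1}^{n+1} γ(x_k) · T(x_1,…,x_{k−1},x_{k+1},…,x_{n+1}). Then S is multiple (p;q,…,q;r)-summing and ‖S‖_{mas(p;q,…,q;r)} ≤ ‖γ‖ · ‖T‖_{mas(p;q,…,q;r)}. -/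
open scoped BigOperators
noncomputable section

/-- The multiple `(p;q₁,…,qₙ;r)`-summing norm of `T`: the infimum of the
admissible constants `C`. -/
def masNormR (𝕂 : Type*) [RCLike 𝕂] {n : ℕ} {E : Fin n → Type*}
    [∀ i, NormedAddCommGroup (E i)] [∀ i, NormedSpace 𝕂 (E i)]
    {F : Type*} [NormedAddCommGroup F] [NormedSpace 𝕂 F]
    (p r : ℝ) (q : Fin n → ℝ) (T : ((i : Fin n) → E i) → F) : ℝ :=
  sInf { C : ℝ | 0 ≤ C ∧ ∀ (m : ℕ) (x : (i : Fin n) → Fin m → E i)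
      (φ : (Fin n → Fin m) → (F →L[𝕂] 𝕂)),
      (∑ j : Fin n → Fin m, ‖φ j (T (fun i => x i (j i)))‖ ^ p) ^ (1 / p) ≤
        C * weakLpNorm 𝕂 r φ * ∏ i, weakLpNorm 𝕂 (q i) (x i) }

/-!
The operator is the average over `k` of `S_k x = γ (x k) • T (k.removeNth x)`, so by Minkowski's
inequality it suffices to bound each `S_k` with constant `‖γ‖ C`. For `S_k`, the two coordinates
`k` and `k.succAbove 0` are merged into one coordinate indexed by pairs: `T` is fed the family
`(a, b) ↦ γ (x k a) • x (k.succAbove 0) b`, whose weak `ℓ^q` norm is at most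
`‖γ‖ ‖x k‖_{w,q} ‖x (k.succAbove 0)‖_{w,q}`, together with the other families and the functionals
extended by zero, which changes no weak norm.
-/

open Function

section weakLpNorm

variable {𝕂 : Type*} [RCLike 𝕂] {E : Type*} [NormedAddCommGroup E] [NormedSpace 𝕂 E]
  {ι : Type*} [Fintype ι] {q : ℝ}

theorem weakLpNorm_nonneg_s5 (q : ℝ) (x : ι → E) : 0 ≤ weakLpNorm 𝕂 q x :=
  Real.iSup_nonneg fun _ => by positivity

theorem rpow_sum_le_weakLpNorm (hq : 0 ≤ q) (x : ι → E) {φ : E →L[𝕂] 𝕂} (hφ : ‖φ‖ ≤ 1) :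
    (∑ j, ‖φ (x j)‖ ^ q) ^ (1 / q) ≤ weakLpNorm 𝕂 q x := by
  refine le_ciSup (f := fun φ : {φ : E →L[𝕂] 𝕂 // ‖φ‖ ≤ 1} => (∑ j, ‖φ.1 (x j)‖ ^ q) ^ (1 / q))
    ⟨(∑ j, ‖x j‖ ^ q) ^ (1 / q), ?_⟩ ⟨φ, hφ⟩
  rintro - ⟨ψ, rfl⟩
  dsimp only
  gcongr with j
  exact ψ.1.le_of_opNorm_le ψ.2 _ |>.trans_eq (one_mul _)

theorem sum_rpow_le_weakLpNorm_rpow (hq : 0 < q) (x : ι → E) {φ : E →L[𝕂] 𝕂} (hφ : ‖φ‖ ≤ 1) :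
    ∑ j, ‖φ (x j)‖ ^ q ≤ weakLpNorm 𝕂 q x ^ q := by
  have h := Real.rpow_le_rpow (by positivity) (rpow_sum_le_weakLpNorm hq.le x hφ) hq.le
  rwa [one_div, Real.rpow_inv_rpow (by positivity) hq.ne'] at h

theorem weakLpNorm_le_of_sum_le (hq : 0 < q) {x : ι → E} {M : ℝ} (hM : 0 ≤ M)
    (h : ∀ φ : E →L[𝕂] 𝕂, ‖φ‖ ≤ 1 → ∑ j, ‖φ (x j)‖ ^ q ≤ M ^ q) :
    weakLpNorm 𝕂 q x ≤ M := by
  have : Nonempty {φ : E →L[𝕂] 𝕂 // ‖φ‖ ≤ 1} := ⟨⟨0, by simp⟩⟩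
  refine ciSup_le fun φ => ?_
  calc (∑ j, ‖φ.1 (x j)‖ ^ q) ^ (1 / q) ≤ (M ^ q) ^ (1 / q) := by gcongr; exact h φ.1 φ.2
    _ = M := by rw [one_div, Real.rpow_rpow_inv hM hq.ne']

theorem weakLpNorm_comp_equiv {κ : Type*} [Fintype κ] (x : ι → E) (e : κ ≃ ι) :
    weakLpNorm 𝕂 q (x ∘ e) = weakLpNorm 𝕂 q x := by
  unfold weakLpNorm
  congr! 2 with φ
  congr 1
  exact e.sum_comp fun j => ‖φ.1 (x j)‖ ^ q

theorem Fintype.sum_extend_zero {α β X M : Type*} [Fintype α] [Fintype β] [Zero X]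
    [AddCommMonoid M] {f : α → β} (hf : Injective f) (x : α → X) (g : β → X → M)
    (hg : ∀ b, g b 0 = 0) :
    ∑ b, g b (extend f x 0 b) = ∑ a, g (f a) (x a) := by
  refine (Fintype.sum_of_injective f hf _ _ (fun b hb => ?_) fun a => ?_).symm
  · rw [extend_apply' _ _ _ hb, Pi.zero_apply, hg]
  · rw [hf.extend_apply]

theorem weakLpNorm_extend_zero (hq : q ≠ 0) {α : Type*} [Fintype α] {f : α → ι}
    (hf : Injective f) (x : α → E) :
    weakLpNorm 𝕂 q (extend f x 0) = weakLpNorm 𝕂 q x := by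
  unfold weakLpNorm
  congr! 2 with φ
  congr 1
  exact Fintype.sum_extend_zero hf x (fun _ v => ‖φ.1 v‖ ^ q) fun _ => by
    simp [Real.zero_rpow hq]

theorem sum_norm_apply_rpow_le (hq : 0 < q) (γ : E →L[𝕂] 𝕂) (x : ι → E) :
    ∑ j, ‖γ (x j)‖ ^ q ≤ (‖γ‖ * weakLpNorm 𝕂 q x) ^ q := by
  rcases eq_or_ne γ 0 with rfl | hγ
  · simp [Real.zero_rpow hq.ne']
  have hγ0 : 0 < ‖γ‖ := norm_pos_iff.2 hγ
  set u : E →L[𝕂] 𝕂 := (‖γ‖⁻¹ : 𝕂) • γ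
  have hu : ‖u‖ ≤ 1 := by
    rw [norm_smul, norm_inv, RCLike.norm_ofReal, abs_norm, inv_mul_cancel₀ hγ0.ne']
  have hγu : ∀ v, ‖γ v‖ = ‖γ‖ * ‖u v‖ := fun v => by
    rw [smul_apply, norm_smul, norm_inv, RCLike.norm_ofReal, abs_norm,
      mul_inv_cancel_left₀ hγ0.ne']
  calc ∑ j, ‖γ (x j)‖ ^ q = ‖γ‖ ^ q * ∑ j, ‖u (x j)‖ ^ q := by
        simp_rw [hγu, Real.mul_rpow (norm_nonneg _) (norm_nonneg _), Finset.mul_sum]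
    _ ≤ ‖γ‖ ^ q * weakLpNorm 𝕂 q x ^ q := by gcongr; exact sum_rpow_le_weakLpNorm_rpow hq x hu
    _ = (‖γ‖ * weakLpNorm 𝕂 q x) ^ q := (Real.mul_rpow (norm_nonneg _) (weakLpNorm_nonneg_s5 _ _)).symm

theorem weakLpNorm_prod_smul_le (hq : 0 < q) {α β E' : Type*} [Fintype α] [Fintype β]
    [NormedAddCommGroup E'] [NormedSpace 𝕂 E'] (γ : E' →L[𝕂] 𝕂) (u : α → E') (z : β → E) :
    weakLpNorm 𝕂 q (fun c : α × β => γ (u c.1) • z c.2) ≤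
      ‖γ‖ * weakLpNorm 𝕂 q u * weakLpNorm 𝕂 q z := by
  have hu := weakLpNorm_nonneg_s5 (𝕂 := 𝕂) q u
  have hz := weakLpNorm_nonneg_s5 (𝕂 := 𝕂) q z
  refine weakLpNorm_le_of_sum_le hq (by positivity) fun φ hφ => ?_
  calc ∑ c : α × β, ‖φ (γ (u c.1) • z c.2)‖ ^ q
      = (∑ a, ‖γ (u a)‖ ^ q) * ∑ b, ‖φ (z b)‖ ^ q := by
        simp_rw [Fintype.sum_prod_type, Finset.sum_mul_sum, map_smul, norm_smul,
          Real.mul_rpow (norm_nonneg _) (norm_nonneg _)]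
    _ ≤ (‖γ‖ * weakLpNorm 𝕂 q u) ^ q * weakLpNorm 𝕂 q z ^ q :=
        mul_le_mul (sum_norm_apply_rpow_le hq γ u) (sum_rpow_le_weakLpNorm_rpow hq z hφ)
          (by positivity) (by positivity)
    _ = (‖γ‖ * weakLpNorm 𝕂 q u * weakLpNorm 𝕂 q z) ^ q := by
        rw [← Real.mul_rpow (by positivity) hz]

end weakLpNorm

section MultipleSumming

variable {𝕂 : Type*} [RCLike 𝕂] {n : ℕ} {E : Fin n → Type*}
  [∀ i, NormedAddCommGroup (E i)] [∀ i, NormedSpace 𝕂 (E i)]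
  {F : Type*} [NormedAddCommGroup F] [NormedSpace 𝕂 F] {p r C : ℝ} {q : Fin n → ℝ}

variable (𝕂 p r q) in
def MultipleSummingWith (T : ((i : Fin n) → E i) → F) (C : ℝ) : Prop :=
  ∀ (m : ℕ) (x : (i : Fin n) → Fin m → E i) (φ : (Fin n → Fin m) → (F →L[𝕂] 𝕂)),
    (∑ j : Fin n → Fin m, ‖φ j (T (fun i => x i (j i)))‖ ^ p) ^ (1 / p) ≤
      C * weakLpNorm 𝕂 r φ * ∏ i, weakLpNorm 𝕂 (q i) (x i)

theorem MultipleSummingWith.le_of_fintype {T : ((i : Fin n) → E i) → F}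
    (hT : MultipleSummingWith 𝕂 p r q T C) {ι : Type*} [Fintype ι] (x : (i : Fin n) → ι → E i)
    (φ : (Fin n → ι) → (F →L[𝕂] 𝕂)) :
    (∑ j : Fin n → ι, ‖φ j (T (fun i => x i (j i)))‖ ^ p) ^ (1 / p) ≤
      C * weakLpNorm 𝕂 r φ * ∏ i, weakLpNorm 𝕂 (q i) (x i) := by
  let e := (Fintype.equivFin ι).symm
  let σ : (Fin n → Fin (Fintype.card ι)) ≃ (Fin n → ι) := (Equiv.refl _).arrowCongr e
  have h := hT _ (fun i => x i ∘ e) (φ ∘ σ)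
  simp only [weakLpNorm_comp_equiv] at h
  rwa [← σ.sum_comp]

theorem MultipleSummingWith.mono {T : ((i : Fin n) → E i) → F}
    (hT : MultipleSummingWith 𝕂 p r q T C) {C' : ℝ} (hC : C ≤ C') :
    MultipleSummingWith 𝕂 p r q T C' := fun m x φ =>
  (hT m x φ).trans <| by
    have := weakLpNorm_nonneg_s5 (𝕂 := 𝕂) r φ
    have : 0 ≤ ∏ i, weakLpNorm 𝕂 (q i) (x i) := Finset.prod_nonneg fun i _ => weakLpNorm_nonneg_s5 _ _
    gcongr

theorem MultipleSummingWith.smul (hp : p ≠ 0) {T : ((i : Fin n) → E i) → F}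
    (hT : MultipleSummingWith 𝕂 p r q T C) (c : 𝕂) :
    MultipleSummingWith 𝕂 p r q (fun x => c • T x) (‖c‖ * C) := fun m x φ => by
  calc (∑ j : Fin n → Fin m, ‖φ j (c • T fun i => x i (j i))‖ ^ p) ^ (1 / p)
      = ‖c‖ * (∑ j : Fin n → Fin m, ‖φ j (T fun i => x i (j i))‖ ^ p) ^ (1 / p) := by
        simp_rw [map_smul, norm_smul, Real.mul_rpow (norm_nonneg _) (norm_nonneg _),
          ← Finset.mul_sum]
        rw [Real.mul_rpow (by positivity) (by positivity), one_div,
          Real.rpow_rpow_inv (norm_nonneg _) hp]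
    _ ≤ ‖c‖ * (C * weakLpNorm 𝕂 r φ * ∏ i, weakLpNorm 𝕂 (q i) (x i)) := by gcongr; exact hT m x φ
    _ = ‖c‖ * C * weakLpNorm 𝕂 r φ * ∏ i, weakLpNorm 𝕂 (q i) (x i) := by ring

theorem MultipleSummingWith.add (hp : 1 ≤ p) {T₁ T₂ : ((i : Fin n) → E i) → F} {C₁ C₂ : ℝ}
    (h₁ : MultipleSummingWith 𝕂 p r q T₁ C₁) (h₂ : MultipleSummingWith 𝕂 p r q T₂ C₂) :
    MultipleSummingWith 𝕂 p r q (fun x => T₁ x + T₂ x) (C₁ + C₂) := fun m x φ => by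
  calc (∑ j : Fin n → Fin m,
        ‖φ j (T₁ (fun i => x i (j i)) + T₂ fun i => x i (j i))‖ ^ p) ^ (1 / p)
      ≤ (∑ j : Fin n → Fin m,
          (‖φ j (T₁ fun i => x i (j i))‖ + ‖φ j (T₂ fun i => x i (j i))‖) ^ p) ^ (1 / p) := by
        gcongr with j
        rw [map_add]
        exact norm_add_le _ _
    _ ≤ (∑ j : Fin n → Fin m, ‖φ j (T₁ fun i => x i (j i))‖ ^ p) ^ (1 / p) +
          (∑ j : Fin n → Fin m, ‖φ j (T₂ fun i => x i (j i))‖ ^ p) ^ (1 / p) :=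
        Real.Lp_add_le_of_nonneg _ hp (fun _ _ => norm_nonneg _) fun _ _ => norm_nonneg _
    _ ≤ _ := (add_le_add (h₁ m x φ) (h₂ m x φ)).trans_eq (by ring)

theorem MultipleSummingWith.sum (hp : 1 ≤ p) {κ : Type*} (s : Finset κ)
    {T : κ → ((i : Fin n) → E i) → F} {C : κ → ℝ}
    (hT : ∀ k ∈ s, MultipleSummingWith 𝕂 p r q (T k) (C k)) :
    MultipleSummingWith 𝕂 p r q (fun x => ∑ k ∈ s, T k x) (∑ k ∈ s, C k) := by
  classical
  induction s using Finset.induction with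
  | empty =>
    intro m x φ
    simp [Real.zero_rpow (by linarith : p ≠ 0), Real.zero_rpow (by positivity : p⁻¹ ≠ 0)]
  | insert k s hk ih =>
    simp only [Finset.sum_insert hk]
    exact (hT k (s.mem_insert_self k)).add hp (ih fun k' hk' => hT k' (s.mem_insert_of_mem hk'))

variable {n' : ℕ} {E' : Fin n' → Type*} [∀ i, NormedAddCommGroup (E' i)]
  [∀ i, NormedSpace 𝕂 (E' i)] {F' : Type*} [NormedAddCommGroup F'] [NormedSpace 𝕂 F']
  {p' r' : ℝ} {q' : Fin n' → ℝ}

theorem masNormR_le_mul_of_forall {T : ((i : Fin n) → E i) → F}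
    {T' : ((i : Fin n') → E' i) → F'} {a : ℝ} (ha : 0 ≤ a) (hT : MultipleSummingR 𝕂 p r q T)
    (h : ∀ C, 0 ≤ C → MultipleSummingWith 𝕂 p r q T C →
      MultipleSummingWith 𝕂 p' r' q' T' (a * C)) :
    masNormR 𝕂 p' r' q' T' ≤ a * masNormR 𝕂 p r q T := by
  obtain ⟨C, hC⟩ := hT
  rw [masNormR, masNormR, ← smul_eq_mul, ← Real.sInf_smul_of_nonneg ha]
  refine csInf_le_csInf ⟨0, fun _ h => h.1⟩ ⟨_, Set.smul_mem_smul_set hC⟩ ?_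
  rintro _ ⟨C, ⟨hC0, hC⟩, rfl⟩
  exact ⟨mul_nonneg ha hC0, h C hC0 hC⟩

end MultipleSumming

section GammaTimes

variable {𝕂 : Type*} [RCLike 𝕂] {n : ℕ} {E F : Type*} [NormedAddCommGroup E] [NormedSpace 𝕂 E]
  [NormedAddCommGroup F] [NormedSpace 𝕂 F] {p q r C : ℝ}

theorem MultipleSummingWith.smul_removeNth (hp : p ≠ 0) (hq : 0 < q) (hr : r ≠ 0) (hC : 0 ≤ C)
    {T : MultilinearMap 𝕂 (fun _ : Fin (n + 1) => E) F}
    (hT : MultipleSummingWith 𝕂 p r (fun _ => q) T C) (γ : E →L[𝕂] 𝕂) (k : Fin (n + 2)) :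
    MultipleSummingWith 𝕂 p r (fun _ => q)
      (fun x : Fin (n + 2) → E => γ (x k) • T (k.removeNth x)) (‖γ‖ * C) := by
  intro m x φ
  -- coordinate `0` carries the pair `(j k, j (k.succAbove 0))`, the others only the `none` slice
  let emb : (Fin (n + 2) → Fin m) → Fin (n + 1) → Option (Fin m) × Fin m := fun j i =>
    (if i = 0 then some (j k) else none, j (k.succAbove i))
  let y₀ : Option (Fin m) × Fin m → E :=
    extend (Prod.map some id) (fun c => γ (x k c.1) • x (k.succAbove 0) c.2) 0
  let y : Fin (n + 1) → Option (Fin m) × Fin m → E :=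
    Fin.cons y₀ fun i => extend (Prod.mk none) (x (k.succAbove i.succ)) 0
  have emb_inj : Injective emb := by
    intro j j' h
    funext a
    rcases Fin.eq_self_or_eq_succAbove k a with rfl | ⟨i, rfl⟩
    · simpa [emb] using congrArg Prod.fst (congrFun h 0)
    · simpa [emb] using congrArg Prod.snd (congrFun h i)
  have hTy : ∀ j, T (fun i => y i (emb j i)) =
      γ (x k (j k)) • T (k.removeNth fun i => x i (j i)) := by
    intro j
    have hyemb : (fun i => y i (emb j i)) =
        Fin.cons (γ (x k (j k)) • x (k.succAbove 0) (j (k.succAbove 0)))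
          (Fin.tail (k.removeNth fun i => x i (j i))) := by
      funext i
      refine Fin.cases ?_ (fun i => ?_) i
      · simpa [y, y₀, emb] using ((Option.some_injective _).prodMap injective_id).extend_apply
          (fun c => γ (x k c.1) • x (k.succAbove 0) c.2) 0 (j k, j (k.succAbove 0))
      · simp [y, emb, (Prod.mk_right_injective _).extend_apply, Fin.tail, Fin.removeNth]
    rw [hyemb, T.cons_smul]
    exact congrArg _ (congrArg T (Fin.cons_self_tail (k.removeNth fun i => x i (j i))))
  have hy : ∏ i, weakLpNorm 𝕂 q (y i) ≤ ‖γ‖ * ∏ i, weakLpNorm 𝕂 q (x i) := by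
    have hy₀ : weakLpNorm 𝕂 q y₀ ≤
        ‖γ‖ * weakLpNorm 𝕂 q (x k) * weakLpNorm 𝕂 q (x (k.succAbove 0)) := by
      rw [weakLpNorm_extend_zero hq.ne' ((Option.some_injective _).prodMap injective_id)]
      exact weakLpNorm_prod_smul_le hq γ (x k) (x (k.succAbove 0))
    have : 0 ≤ ∏ i : Fin n, weakLpNorm 𝕂 q (x (k.succAbove i.succ)) :=
      Finset.prod_nonneg fun _ _ => weakLpNorm_nonneg_s5 q _
    rw [Fin.prod_univ_succ, Fin.prod_univ_succAbove _ k, Fin.prod_univ_succ]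
    simp only [y, Fin.cons_zero, Fin.cons_succ,
      weakLpNorm_extend_zero hq.ne' (Prod.mk_right_injective _)]
    calc weakLpNorm 𝕂 q y₀ * ∏ i : Fin n, weakLpNorm 𝕂 q (x (k.succAbove i.succ))
        ≤ ‖γ‖ * weakLpNorm 𝕂 q (x k) * weakLpNorm 𝕂 q (x (k.succAbove 0)) *
          ∏ i : Fin n, weakLpNorm 𝕂 q (x (k.succAbove i.succ)) := by gcongr
      _ = _ := by ring
  have hψ := weakLpNorm_extend_zero (𝕂 := 𝕂) hr emb_inj φ
  calc (∑ j, ‖φ j (γ (x k (j k)) • T (k.removeNth fun i => x i (j i)))‖ ^ p) ^ (1 / p)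
      = (∑ J, ‖extend emb φ 0 J (T fun i => y i (J i))‖ ^ p) ^ (1 / p) := by
        rw [Fintype.sum_extend_zero emb_inj φ (fun J ψ => ‖ψ (T fun i => y i (J i))‖ ^ p)
          fun _ => by simp [Real.zero_rpow hp]]
        simp only [hTy]
    _ ≤ C * weakLpNorm 𝕂 r (extend emb φ 0) * ∏ i, weakLpNorm 𝕂 q (y i) := hT.le_of_fintype y _
    _ ≤ C * weakLpNorm 𝕂 r φ * (‖γ‖ * ∏ i, weakLpNorm 𝕂 q (x i)) := by
        rw [hψ]
        have := weakLpNorm_nonneg_s5 (𝕂 := 𝕂) r φ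
        gcongr
    _ = ‖γ‖ * C * weakLpNorm 𝕂 r φ * ∏ i, weakLpNorm 𝕂 q (x i) := by ring

theorem MultipleSummingWith.inv_smul_sum_smul_removeNth (hp : 1 ≤ p) (hq : 0 < q) (hr : r ≠ 0)
    (hC : 0 ≤ C) {T : MultilinearMap 𝕂 (fun _ : Fin (n + 1) => E) F}
    (hT : MultipleSummingWith 𝕂 p r (fun _ => q) T C) (γ : E →L[𝕂] 𝕂) :
    MultipleSummingWith 𝕂 p r (fun _ => q)
      (fun x : Fin (n + 2) → E =>
        ((n + 2 : 𝕂))⁻¹ • ∑ k : Fin (n + 2), γ (x k) • T (k.removeNth x)) (‖γ‖ * C) := by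
  have hp0 : p ≠ 0 := by linarith
  have hsum := MultipleSummingWith.sum hp Finset.univ fun k _ =>
    hT.smul_removeNth hp0 hq hr hC γ k
  refine (hsum.smul hp0 _).mono (le_of_eq ?_)
  have hnorm : ‖((n + 2 : 𝕂))⁻¹‖ = ((n : ℝ) + 2)⁻¹ := by
    rw [norm_inv, show (n + 2 : 𝕂) = ((n + 2 : ℕ) : 𝕂) by push_cast; rfl, RCLike.norm_natCast]
    push_cast; rfl
  rw [Finset.sum_const, Finset.card_univ, Fintype.card_fin, nsmul_eq_mul, hnorm]
  push_cast
  field_simp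

end GammaTimes

theorem multipleSummingR_gamma_mul_general
    {𝕂 : Type*} [RCLike 𝕂] {n : ℕ}
    (p q r : ℝ) (hp : 1 ≤ p) (hq : 1 ≤ q) (hr : 1 ≤ r)
    (E : Type*) [NormedAddCommGroup E] [NormedSpace 𝕂 E]
    (F : Type*) [NormedAddCommGroup F] [NormedSpace 𝕂 F]
    (T : ContinuousMultilinearMap 𝕂 (fun _ : Fin (n + 1) => E) F)
    (hT : MultipleSummingR 𝕂 p r (fun _ : Fin (n + 1) => q) (⇑T))
    (γ : E →L[𝕂] 𝕂) :
    MultipleSummingR 𝕂 p r (fun _ : Fin (n + 2) => q)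
        (fun x : Fin (n + 2) → E =>
          ((n + 2 : 𝕂))⁻¹ • ∑ k : Fin (n + 2), γ (x k) • T (k.removeNth x)) ∧
      masNormR 𝕂 p r (fun _ : Fin (n + 2) => q)
          (fun x : Fin (n + 2) → E =>
            ((n + 2 : 𝕂))⁻¹ • ∑ k : Fin (n + 2), γ (x k) • T (k.removeNth x)) ≤
        ‖γ‖ * masNormR 𝕂 p r (fun _ : Fin (n + 1) => q) (⇑T) := by
  have hS : ∀ C, 0 ≤ C → MultipleSummingWith 𝕂 p r (fun _ => q) T C →
      MultipleSummingWith 𝕂 p r (fun _ => q)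
        (fun x : Fin (n + 2) → E =>
          ((n + 2 : 𝕂))⁻¹ • ∑ k : Fin (n + 2), γ (x k) • T (k.removeNth x)) (‖γ‖ * C) :=
    fun C hC0 hC => MultipleSummingWith.inv_smul_sum_smul_removeNth (T := T.toMultilinearMap)
      hp (by linarith) (by linarith) hC0 hC γ
  obtain ⟨C, hC0, hC⟩ := hT
  exact ⟨⟨_, mul_nonneg (norm_nonneg γ) hC0, hS C hC0 hC⟩,
    masNormR_le_mul_of_forall (norm_nonneg γ) ⟨C, hC0, hC⟩ hS⟩

/-- if `T : E^{n+1} → F` is a symmetric continuous `(n+1)`-linear operator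
which is multiple `(p;q,…,q;r)`-summing and `γ ∈ E*`, then the symmetric `(n+2)`-linear
operator `S(x) = (1/(n+2)) ∑ₖ γ(xₖ) T(x₁,…,x̂ₖ,…,x_{n+2})` (the symmetric multilinear
operator associated to `γ·P`) is multiple `(p;q,…,q;r)`-summing with
`‖S‖ ≤ ‖γ‖ ‖T‖`.  (Here the arity of `T` is `n + 1 ≥ 1`.) -/
theorem multipleSummingR_gamma_mul
    {𝕂 : Type*} [RCLike 𝕂] {n : ℕ}
    (p q r : ℝ) (hp : 1 ≤ p) (hq : 1 ≤ q) (hr : 1 ≤ r)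
    (E : Type*) [NormedAddCommGroup E] [NormedSpace 𝕂 E] [CompleteSpace E]
    (F : Type*) [NormedAddCommGroup F] [NormedSpace 𝕂 F] [CompleteSpace F]
    (T : ContinuousMultilinearMap 𝕂 (fun _ : Fin (n + 1) => E) F)
    (hsymm : ∀ (x : Fin (n + 1) → E) (σ : Equiv.Perm (Fin (n + 1))),
      T (fun i => x (σ i)) = T x)
    (hT : MultipleSummingR 𝕂 p r (fun _ : Fin (n + 1) => q) (⇑T))
    (γ : E →L[𝕂] 𝕂) :
    MultipleSummingR 𝕂 p r (fun _ : Fin (n + 2) => q)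
        (fun x : Fin (n + 2) → E =>
          ((n + 2 : 𝕂))⁻¹ • ∑ k : Fin (n + 2), γ (x k) • T (k.removeNth x)) ∧
      masNormR 𝕂 p r (fun _ : Fin (n + 2) => q)
          (fun x : Fin (n + 2) → E =>
            ((n + 2 : 𝕂))⁻¹ • ∑ k : Fin (n + 2), γ (x k) • T (k.removeNth x)) ≤
        ‖γ‖ * masNormR 𝕂 p r (fun _ : Fin (n + 1) => q) (⇑T) :=
  multipleSummingR_gamma_mul_general p q r hp hq hr E F T hT γ
end
end
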